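/- In the algebra of operators on functions Z_2^n → Z_2, the identity s^b x^c = Σ_{k ⊆ b ∩ c} x^{c \ k} s^b holds for subsets b, c of [n], and hence x^a s^b x^c s^d = Σ_{e ⊆ b ∩ c} x^{a ∪ (c \ e)} s^{b+d}. -/

import Mathlib

open Finset

/-- The space of all functions `Z_2^n → Z_2`. -/
abbrev V (n : ℕ) : Type := (Fin n → ZMod 2) → ZMod 2

/-- Indicator vector of a subset of `[n]`, identifying `P[n]` with `Z_2^n`. -/
def ind {n : ℕ} (a : Finset (Fin n)) : Fin n → ZMod 2 :=
  fun i => if i ∈ a then 1 else 0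

/-- `m^a`: the indicator function of the single point `a`. -/
def mFun {n : ℕ} (a : Finset (Fin n)) : V n :=
  fun b => if b = ind a then 1 else 0

/-- `x^a`: the monomial function, `x^a(b) = 1` iff `a ⊆ b`. -/
def xFun {n : ℕ} (a : Finset (Fin n)) : V n :=
  fun b => if ∀ i ∈ a, b i = 1 then 1 else 0

/-- `w^a = ∏_{i ∈ a} (x_i + 1)`: `w^a(b) = 1` iff `b ⊆ [n] \ a`. -/
def wFun {n : ℕ} (a : Finset (Fin n)) : V n :=
  fun b => if ∀ i ∈ a, b i = 0 then 1 else 0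

/-- The shift operator `s_i`, `(s_i f)(x) = f(x + e_i)`. -/
def shiftOp {n : ℕ} (i : Fin n) : Module.End (ZMod 2) (V n) where
  toFun f := fun x => f (x + Pi.single i 1)
  map_add' f g := rfl
  map_smul' c f := by funext x; rfl

/-- The Boolean partial derivative `∂_i`, `(∂_i f)(x) = f(x + e_i) + f(x)`. -/
def derivOp {n : ℕ} (i : Fin n) : Module.End (ZMod 2) (V n) where
  toFun f := fun x => f (x + Pi.single i 1) + f x
  map_add' f g := by
    funext x
    show (f + g) _ + (f + g) _ = _
    simp only [Pi.add_apply]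
    ring
  map_smul' c f := by
    funext x
    show (c • f) _ + (c • f) _ = _
    simp only [Pi.smul_apply, RingHom.id_apply, smul_eq_mul]
    ring

lemma derivOp_eq_shiftOp_add_one {n : ℕ} (i : Fin n) :
    derivOp (n := n) i = shiftOp i + 1 :=
  LinearMap.ext fun _ => rfl

lemma shiftOp_comm {n : ℕ} (i j : Fin n) : Commute (shiftOp i) (shiftOp (n := n) j) := by
  apply LinearMap.ext; intro f; funext x
  show f (x + Pi.single i 1 + Pi.single j 1) = f (x + Pi.single j 1 + Pi.single i 1)
  rw [add_right_comm]

lemma derivOp_comm {n : ℕ} (i j : Fin n) : Commute (derivOp i) (derivOp (n := n) j) := by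
  rw [derivOp_eq_shiftOp_add_one, derivOp_eq_shiftOp_add_one]
  exact ((shiftOp_comm i j).add_right (Commute.one_right _)).add_left
    ((Commute.one_left _).add_right (Commute.one_right _))

/-- `∂^b = ∏_{i ∈ b} ∂_i`. -/
def derivPow {n : ℕ} (b : Finset (Fin n)) : Module.End (ZMod 2) (V n) :=
  b.noncommProd derivOp (fun i _ j _ _ => derivOp_comm i j)

/-- `s^b = ∏_{i ∈ b} s_i`. -/
def shiftPow {n : ℕ} (b : Finset (Fin n)) : Module.End (ZMod 2) (V n) :=
  b.noncommProd shiftOp (fun i _ j _ _ => shiftOp_comm i j)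

/-- The operator of multiplication by a function `g`. -/
noncomputable def mulOp {n : ℕ} (g : V n) : Module.End (ZMod 2) (V n) :=
  LinearMap.mulLeft (ZMod 2) g

/-- `X_i`: multiplication by the `i`-th coordinate function. -/
noncomputable def XOp {n : ℕ} (i : Fin n) : Module.End (ZMod 2) (V n) :=
  mulOp (fun x => x i)

/-! `s^b` is translation by the indicator vector of `b`, hence a ring endomorphism of `V n`;
so `s^b ∘ g = (s^b g) ∘ s^b` for every multiplication operator `g`. Since
`x^c(y) = ∏_{i ∈ c} y_i` over `Z_2`, the translate `s^b x^c` is `∏_{i ∈ c} ([i ∈ b] + y_i)`, which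
expands to `Σ_{k ⊆ b ∩ c} x^{c \ k}`. The second identity then follows from `x^a x^e = x^{a ∪ e}`
and `s^b s^d = s^{b + d}`. -/

section

variable {n : ℕ}

lemma ind_add_ind (b d : Finset (Fin n)) : ind b + ind d = ind (symmDiff b d) := by
  funext i
  by_cases hb : i ∈ b <;> by_cases hd : i ∈ d <;>
    simp [ind, hb, hd, mem_symmDiff, CharTwo.add_self_eq_zero]

lemma shiftPow_apply (b : Finset (Fin n)) (f : V n) (x : Fin n → ZMod 2) :
    shiftPow b f x = f (x + ind b) := by
  induction b using Finset.induction_on generalizing x with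
  | empty =>
    have hind : ind (∅ : Finset (Fin n)) = 0 := funext fun _ => if_neg (notMem_empty _)
    rw [hind, add_zero]
    rfl
  | insert i b hib ih =>
    erw [shiftPow, noncommProd_insert_of_notMem _ _ _ _ hib]
    refine (ih _).trans (congrArg f ?_)
    funext j
    by_cases hj : j = i
    · subst hj; simp [ind, hib]
    · simp [ind, hj]

lemma shiftPow_mul_shiftPow (b d : Finset (Fin n)) :
    shiftPow b * shiftPow d = shiftPow (symmDiff b d) := by
  refine LinearMap.ext fun f => funext fun x => ?_
  rw [Module.End.mul_apply, shiftPow_apply, shiftPow_apply, shiftPow_apply, add_assoc,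
    ind_add_ind]

lemma mulOp_mul_mulOp (g h : V n) : mulOp g * mulOp h = mulOp (g * h) :=
  (map_mul (Algebra.lmul (ZMod 2) (V n)) g h).symm

lemma mulOp_sum {ι : Type*} (s : Finset ι) (g : ι → V n) :
    mulOp (∑ k ∈ s, g k) = ∑ k ∈ s, mulOp (g k) :=
  map_sum (Algebra.lmul (ZMod 2) (V n)) g s

lemma shiftPow_mul_mulOp (b : Finset (Fin n)) (g : V n) :
    shiftPow b * mulOp g = mulOp (shiftPow b g) * shiftPow b := by
  refine LinearMap.ext fun f => funext fun x => ?_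
  show shiftPow b (g * f) x = shiftPow b g x * shiftPow b f x
  simp only [shiftPow_apply, Pi.mul_apply]

lemma xFun_apply_eq_prod (c : Finset (Fin n)) (y : Fin n → ZMod 2) :
    xFun c y = ∏ i ∈ c, y i := by
  unfold xFun
  split_ifs with h
  · exact (prod_eq_one h).symm
  · push Not at h
    obtain ⟨i, hi, hyi⟩ := h
    have hyi0 : y i = 0 := by generalize y i = v at hyi; revert v; decide
    exact (prod_eq_zero hi hyi0).symm

lemma xFun_mul_xFun (a e : Finset (Fin n)) : xFun a * xFun e = (xFun (a ∪ e) : V n) := by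
  funext y
  simp only [Pi.mul_apply, xFun, forall_mem_union, ite_and, ite_mul, one_mul, zero_mul]

lemma shiftPow_xFun (b c : Finset (Fin n)) :
    shiftPow b (xFun c) = ∑ k ∈ (b ∩ c).powerset, xFun (c \ k) := by
  funext x
  have powerset_filter_subset :
      c.powerset.filter (fun k => ∀ i ∈ k, i ∈ b) = (b ∩ c).powerset := by
    ext k
    simp only [mem_filter, mem_powerset, subset_inter_iff, ← subset_iff]
    tauto
  rw [shiftPow_apply, xFun_apply_eq_prod, Finset.sum_apply]
  simp only [xFun_apply_eq_prod, Pi.add_apply]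
  rw [funext fun i => add_comm (x i) (ind b i), prod_add]
  simp only [ind, prod_boole, ite_mul, one_mul, zero_mul]
  rw [← sum_filter, powerset_filter_subset]

end

/-- `s^b x^c = Σ_{k ⊆ b ∩ c} x^{c \ k} s^b` and hence
`x^a s^b x^c s^d = Σ_{e ⊆ b ∩ c} x^{a ∪ (c \ e)} s^{b+d}`. -/
theorem shiftPow_xOp_relations (n : ℕ) (a b c d : Finset (Fin n)) :
    shiftPow b * mulOp (xFun c) =
      ∑ k ∈ (b ∩ c).powerset, mulOp (xFun (c \ k)) * shiftPow b ∧
    mulOp (xFun a) * shiftPow b * mulOp (xFun c) * shiftPow d =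
      ∑ e ∈ (b ∩ c).powerset, mulOp (xFun (a ∪ (c \ e))) * shiftPow (symmDiff b d) := by
  have commute : shiftPow b * mulOp (xFun c) =
      ∑ k ∈ (b ∩ c).powerset, mulOp (xFun (c \ k)) * shiftPow b := by
    rw [shiftPow_mul_mulOp, shiftPow_xFun, mulOp_sum, sum_mul]
  refine ⟨commute, ?_⟩
  rw [mul_assoc (mulOp _), commute, mul_sum, sum_mul]
  refine sum_congr rfl fun e _ => ?_
  rw [← mul_assoc, mulOp_mul_mulOp, xFun_mul_xFun, mul_assoc, shiftPow_mul_shiftPow]
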